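/- arXiv:2312.03398 — 5 statements merged into one kernel-verified Lean document; each statement's English description precedes it below -/
import Mathlib

section
/- Let s ∈ (0,1/2], s₀ ∈ [s,2s], r ∈ [0,1/2], r₀ ∈ [0,2r] with r₀ s + r s₀ ≥ 2rs. Then for all ζ ∈ ℝ^m and η ∈ ℝ^d, |ζ|^{2s-s₀} ⟨η⟩^{-r₀} ≤ max{1, |ζ|^s ⟨η⟩^{-r}}. -/
/-! With `α = (2s - s₀)/s ∈ [0,1]` the left side is `|ζ|^{αs} ⟨η⟩^{-r₀}`, and since `⟨η⟩ ≥ 1`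
and `αr ≤ r₀` (the mixed condition) it is at most `(|ζ|^s ⟨η⟩^{-r})^α`; a power with exponent
in `[0,1]` of a nonnegative number `x` is at most `max 1 x`. -/

namespace Real

theorem rpow_le_max_one_self {x α : ℝ} (hx : 0 ≤ x) (hα0 : 0 ≤ α) (hα1 : α ≤ 1) :
    x ^ α ≤ max 1 x := by
  rcases le_total x 1 with hx1 | hx1
  · exact le_max_of_le_left (rpow_le_one hx hx1 hα0)
  · exact le_max_of_le_right <| by
      simpa using rpow_le_rpow_of_exponent_le hx1 hα1

theorem rpow_mul_mul_rpow_neg_le {A B s r r₀ α : ℝ} (hA : 0 ≤ A) (hB : 1 ≤ B)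
    (hr : α * r ≤ r₀) :
    A ^ (α * s) * B ^ (-r₀) ≤ (A ^ s * B ^ (-r)) ^ α := by
  have hB0 : 0 < B := zero_lt_one.trans_le hB
  have hsplit : B ^ (-r₀) = (B ^ (-r)) ^ α * B ^ (-(r₀ - α * r)) := by
    rw [← rpow_mul hB0.le, ← rpow_add hB0]
    ring_nf
  have hrest : B ^ (-(r₀ - α * r)) ≤ 1 := rpow_le_one_of_one_le_of_nonpos hB (by linarith)
  rw [mul_rpow (rpow_nonneg hA _) (rpow_nonneg hB0.le _), ← rpow_mul hA, mul_comm s, hsplit]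
  gcongr
  calc (B ^ (-r)) ^ α * B ^ (-(r₀ - α * r)) ≤ (B ^ (-r)) ^ α * 1 := by gcongr
    _ = (B ^ (-r)) ^ α := mul_one _

end Real

theorem one_le_japaneseBracket {E : Type*} [SeminormedAddCommGroup E] (η : E) :
    1 ≤ (1 + ‖η‖ ^ 2) ^ ((1 : ℝ) / 2) :=
  Real.one_le_rpow (by nlinarith [sq_nonneg ‖η‖]) (by norm_num)

theorem stmt_3_general (m d : ℕ) (s s₀ r r₀ : ℝ)
    (hs0 : 0 < s) (hs₀l : s ≤ s₀) (hs₀u : s₀ ≤ 2 * s)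
    (hmix : 2 * r * s ≤ r₀ * s + r * s₀)
    (ζ : EuclideanSpace ℝ (Fin m)) (η : EuclideanSpace ℝ (Fin d)) :
    ‖ζ‖ ^ (2 * s - s₀) * ((1 + ‖η‖ ^ 2) ^ ((1 : ℝ) / 2)) ^ (-r₀) ≤
      max 1 (‖ζ‖ ^ s * ((1 + ‖η‖ ^ 2) ^ ((1 : ℝ) / 2)) ^ (-r)) := by
  set α := (2 * s - s₀) / s
  have hα0 : 0 ≤ α := div_nonneg (by linarith) hs0.le
  have hα1 : α ≤ 1 := by rw [div_le_one hs0]; linarith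
  have hαr : α * r ≤ r₀ := by
    rw [div_mul_eq_mul_div, div_le_iff₀ hs0]; linarith
  have hexp : 2 * s - s₀ = α * s := (div_mul_cancel₀ _ hs0.ne').symm
  rw [hexp]
  exact (Real.rpow_mul_mul_rpow_neg_le (norm_nonneg ζ) (one_le_japaneseBracket η) hαr).trans <|
    Real.rpow_le_max_one_self (by positivity) hα0 hα1

/-- Let `s ∈ (0,1/2]`, `s₀ ∈ [s,2s]`, `r ∈ [0,1/2]`, `r₀ ∈ [0,2r]` with
`r₀ s + r s₀ ≥ 2rs`. Then for all `ζ ∈ ℝ^m` and `η ∈ ℝ^d`,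
`|ζ|^{2s-s₀} ⟨η⟩^{-r₀} ≤ max {1, |ζ|^s ⟨η⟩^{-r}}`, where `⟨η⟩ = (1+|η|²)^{1/2}`. -/
theorem stmt_3 (m d : ℕ) (s s₀ r r₀ : ℝ)
    (hs0 : 0 < s) (hs1 : s ≤ 1 / 2) (hs₀l : s ≤ s₀) (hs₀u : s₀ ≤ 2 * s)
    (hr0 : 0 ≤ r) (hr1 : r ≤ 1 / 2) (hr₀l : 0 ≤ r₀) (hr₀u : r₀ ≤ 2 * r)
    (hmix : 2 * r * s ≤ r₀ * s + r * s₀)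
    (ζ : EuclideanSpace ℝ (Fin m)) (η : EuclideanSpace ℝ (Fin d)) :
    ‖ζ‖ ^ (2 * s - s₀) * ((1 + ‖η‖ ^ 2) ^ ((1 : ℝ) / 2)) ^ (-r₀) ≤
      max 1 (‖ζ‖ ^ s * ((1 + ‖η‖ ^ 2) ^ ((1 : ℝ) / 2)) ^ (-r)) :=
  stmt_3_general m d s s₀ r r₀ hs0 hs₀l hs₀u hmix ζ η
end

section
/- Let σ > 0 and define, for fixed ξ ∈ ℝ^d, the function Φ(η) := ∫₀¹ |θξ - η|^σ dθ for η ∈ ℝ^d. Then for all η ∈ ℝ^d, 2^σ (1+σ) Φ(η) ≥ |ξ|^σ. -/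
/-!
Projecting `η` onto the line `ℝ ξ` gives `‖θ • ξ - η‖ ≥ ‖ξ‖ * |θ - c|` with `c = ⟪ξ, η⟫ / ‖ξ‖ ^ 2`,
so the claim reduces to the one-dimensional bound `∫₀¹ |θ - c| ^ σ ≥ 1 / (2 ^ σ (1 + σ))`.
Moving `c` to the nearest point of `[0, 1]` only decreases the integral, and for `c ∈ [0, 1]` it
equals `(c ^ (σ + 1) + (1 - c) ^ (σ + 1)) / (σ + 1)`, which by the power mean inequality is
smallest at `c = 1 / 2`.
-/

open Set intervalIntegral
open scoped RealInnerProductSpace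

lemma Real.rpow_add_le_mul_rpow_add_rpow {a b p : ℝ} (ha : 0 ≤ a) (hb : 0 ≤ b) (hp : 1 ≤ p) :
    (a + b) ^ p ≤ 2 ^ (p - 1) * (a ^ p + b ^ p) := by
  lift a to NNReal using ha
  lift b to NNReal using hb
  exact_mod_cast NNReal.rpow_add_le_mul_rpow_add_rpow a b hp

lemma norm_mul_abs_sub_le_norm_smul_sub {E : Type*} [NormedAddCommGroup E]
    [InnerProductSpace ℝ E] (ξ η : E) (θ : ℝ) :
    ‖ξ‖ * |θ - ⟪ξ, η⟫ / ‖ξ‖ ^ 2| ≤ ‖θ • ξ - η‖ := by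
  rcases eq_or_ne ξ 0 with rfl | hξ
  · simp
  have hξ' : 0 < ‖ξ‖ := norm_pos_iff.mpr hξ
  have hinner : ⟪ξ, θ • ξ - η⟫ = ‖ξ‖ ^ 2 * (θ - ⟪ξ, η⟫ / ‖ξ‖ ^ 2) := by
    rw [inner_sub_right, real_inner_smul_right, real_inner_self_eq_norm_sq]
    field_simp
  refine le_of_mul_le_mul_left ?_ hξ'
  calc ‖ξ‖ * (‖ξ‖ * |θ - ⟪ξ, η⟫ / ‖ξ‖ ^ 2|) = |⟪ξ, θ • ξ - η⟫| := by
        rw [hinner, abs_mul, abs_of_nonneg (sq_nonneg ‖ξ‖)]; ring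
    _ ≤ ‖ξ‖ * ‖θ • ξ - η‖ := abs_real_inner_le_norm _ _

lemma continuous_abs_sub_rpow {σ : ℝ} (hσ : 0 ≤ σ) (c : ℝ) :
    Continuous fun θ : ℝ => |θ - c| ^ σ :=
  (continuous_id.sub continuous_const).abs.rpow_const fun _ => Or.inr hσ

lemma integral_abs_sub_rpow {a b c σ : ℝ} (hac : a ≤ c) (hcb : c ≤ b) (hσ : 0 ≤ σ) :
    ∫ θ in a..b, |θ - c| ^ σ = ((c - a) ^ (σ + 1) + (b - c) ^ (σ + 1)) / (σ + 1) := by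
  have hint := continuous_abs_sub_rpow hσ c
  have hσ1 : σ + 1 ≠ 0 := by linarith
  rw [← integral_add_adjacent_intervals (hint.intervalIntegrable a c)
    (hint.intervalIntegrable c b)]
  have hleft : ∫ θ in a..c, |θ - c| ^ σ = ∫ θ in a..c, (c - θ) ^ σ := by
    refine integral_congr fun θ hθ => ?_
    rw [uIcc_of_le hac] at hθ
    simp only [abs_sub_comm θ, abs_of_nonneg (sub_nonneg.mpr hθ.2)]
  have hright : ∫ θ in c..b, |θ - c| ^ σ = ∫ θ in c..b, (θ - c) ^ σ := by
    refine integral_congr fun θ hθ => ?_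
    rw [uIcc_of_le hcb] at hθ
    simp only [abs_of_nonneg (sub_nonneg.mpr hθ.1)]
  rw [hleft, hright, integral_comp_sub_left (· ^ σ), integral_comp_sub_right (· ^ σ),
    integral_rpow (Or.inl (by linarith)), integral_rpow (Or.inl (by linarith))]
  simp only [sub_self, Real.zero_rpow hσ1, sub_zero]
  ring

lemma one_le_two_rpow_mul_integral_abs_sub_rpow {σ : ℝ} (hσ : 0 ≤ σ) (c : ℝ) :
    1 ≤ 2 ^ σ * (1 + σ) * ∫ θ in (0:ℝ)..1, |θ - c| ^ σ := by
  set c' : ℝ := (projIcc 0 1 zero_le_one c : ℝ)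
  have hc' : c' ∈ Icc (0:ℝ) 1 := Subtype.mem _
  have hproj : ∫ θ in (0:ℝ)..1, |θ - c'| ^ σ ≤ ∫ θ in (0:ℝ)..1, |θ - c| ^ σ := by
    refine integral_mono_on zero_le_one ((continuous_abs_sub_rpow hσ c').intervalIntegrable _ _)
      ((continuous_abs_sub_rpow hσ c).intervalIntegrable _ _) fun θ hθ => ?_
    refine Real.rpow_le_rpow (abs_nonneg _) ?_ hσ
    simpa [c', projIcc_of_mem zero_le_one hθ] using
      abs_projIcc_sub_projIcc (h := zero_le_one) (c := θ) (d := c)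
  have hmean := Real.rpow_add_le_mul_rpow_add_rpow hc'.1 (sub_nonneg.mpr hc'.2)
    (le_add_of_nonneg_left hσ : 1 ≤ σ + 1)
  rw [integral_abs_sub_rpow hc'.1 hc'.2 hσ] at hproj
  simp only [sub_zero, add_sub_cancel, Real.one_rpow, add_sub_cancel_right] at hmean hproj
  calc (1 : ℝ) ≤ 2 ^ σ * (1 + σ) * ((c' ^ (σ + 1) + (1 - c') ^ (σ + 1)) / (σ + 1)) := by
        rw [add_comm 1 σ, mul_assoc, mul_div_cancel₀ _ (by linarith)]; exact hmean
    _ ≤ _ := by gcongr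

/-- Let `σ > 0`, `ξ ∈ ℝ^d`, and `Φ(η) := ∫₀¹ |θξ - η|^σ dθ`. Then
`2^σ (1+σ) Φ(η) ≥ |ξ|^σ` for all `η`. -/
theorem stmt_4 (d : ℕ) (σ : ℝ) (hσ : 0 < σ) (ξ η : EuclideanSpace ℝ (Fin d)) :
    ‖ξ‖ ^ σ ≤ 2 ^ σ * (1 + σ) * ∫ θ in (0:ℝ)..1, ‖θ • ξ - η‖ ^ σ := by
  set c := ⟪ξ, η⟫ / ‖ξ‖ ^ 2
  have hproj : ∫ θ in (0:ℝ)..1, ‖ξ‖ ^ σ * |θ - c| ^ σ ≤ ∫ θ in (0:ℝ)..1, ‖θ • ξ - η‖ ^ σ := by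
    refine integral_mono_on zero_le_one
      ((continuous_const.mul (continuous_abs_sub_rpow hσ.le c)).intervalIntegrable _ _)
      ((((continuous_id.smul continuous_const).sub continuous_const).norm.rpow_const
        fun _ => Or.inr hσ.le).intervalIntegrable _ _) fun θ _ => ?_
    rw [← Real.mul_rpow (norm_nonneg _) (abs_nonneg _)]
    exact Real.rpow_le_rpow (by positivity) (norm_mul_abs_sub_le_norm_smul_sub ξ η θ) hσ.le
  rw [intervalIntegral.integral_const_mul] at hproj
  calc ‖ξ‖ ^ σ ≤ ‖ξ‖ ^ σ * (2 ^ σ * (1 + σ) * ∫ θ in (0:ℝ)..1, |θ - c| ^ σ) :=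
        le_mul_of_one_le_right (by positivity) (one_le_two_rpow_mul_integral_abs_sub_rpow hσ.le c)
    _ = 2 ^ σ * (1 + σ) * (‖ξ‖ ^ σ * ∫ θ in (0:ℝ)..1, |θ - c| ^ σ) := by ring
    _ ≤ _ := by gcongr
end

section
/- Let σ > 0 and ξ, η ∈ ℝ^d. Then 2^σ (1 + 2^σ(1+σ)) ∫₀¹ |θξ - η|^σ dθ ≥ |η|^σ. -/
open intervalIntegral Real

/-!
Since `|θ‖ξ‖ - ‖η‖| ≤ ‖θξ - η‖`, it suffices to treat scalars `a, b ≥ 0`. If `a ≤ b` then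
`|θa - b| ≥ b |θ - 1|`, otherwise `|θa - b| = a |θ - b/a|`; in both cases the integrand dominates
`c^σ |θ - t|^σ` with `ct = b` and `t ∈ [0, 1]`. Now
`∫₀¹ |θ - t|^σ dθ = (t^(σ+1) + (1-t)^(σ+1)) / (σ+1) ≥ t^σ / (2(σ+1))`, because `max t (1-t)` is at
least both `t` and `1/2`. The resulting constant `2(σ+1)` is at most `2^σ (1 + 2^σ (1+σ))` since
`4^σ ≥ 1 + σ`.
-/

theorem integral_abs_sub_rpow_of_mem_Icc {σ t : ℝ} (hσ : 0 ≤ σ) (ht₀ : 0 ≤ t) (ht₁ : t ≤ 1) :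
    ∫ θ in (0:ℝ)..1, |θ - t| ^ σ = (t ^ (σ + 1) + (1 - t) ^ (σ + 1)) / (σ + 1) := by
  have hint : ∀ u v : ℝ, IntervalIntegrable (fun θ : ℝ => |θ - t| ^ σ) MeasureTheory.volume u v :=
    fun u v => (by fun_prop : Continuous fun θ : ℝ => |θ - t| ^ σ).intervalIntegrable u v
  have hleft : ∫ θ in (0:ℝ)..t, |θ - t| ^ σ = t ^ (σ + 1) / (σ + 1) := by
    rw [integral_congr (g := fun θ => (t - θ) ^ σ) fun θ hθ => by
      rw [Set.uIcc_of_le ht₀] at hθ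
      simp only [abs_sub_comm θ, abs_of_nonneg (sub_nonneg.2 hθ.2)]]
    rw [integral_comp_sub_left (fun x => x ^ σ), sub_self, sub_zero,
      integral_rpow (Or.inl (by linarith)), zero_rpow (by linarith), sub_zero]
  have hright : ∫ θ in t..1, |θ - t| ^ σ = (1 - t) ^ (σ + 1) / (σ + 1) := by
    rw [integral_congr (g := fun θ => (θ - t) ^ σ) fun θ hθ => by
      rw [Set.uIcc_of_le ht₁] at hθ
      simp only [abs_of_nonneg (sub_nonneg.2 hθ.1)]]
    rw [integral_comp_sub_right (fun x => x ^ σ), sub_self,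
      integral_rpow (Or.inl (by linarith)), zero_rpow (by linarith), sub_zero]
  rw [← integral_add_adjacent_intervals (hint 0 t) (hint t 1), hleft, hright, add_div]

theorem rpow_le_two_mul_rpow_add_one (σ : ℝ) {x : ℝ} (hx : 1 / 2 ≤ x) :
    x ^ σ ≤ 2 * x ^ (σ + 1) := by
  rw [rpow_add_one (by positivity)]
  nlinarith [rpow_nonneg (show 0 ≤ x by linarith) σ]

theorem rpow_le_two_mul_integral_abs_sub_rpow {σ t : ℝ} (hσ : 0 ≤ σ) (ht₀ : 0 ≤ t) (ht₁ : t ≤ 1) :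
    t ^ σ ≤ 2 * (σ + 1) * ∫ θ in (0:ℝ)..1, |θ - t| ^ σ := by
  rw [integral_abs_sub_rpow_of_mem_Icc hσ ht₀ ht₁, mul_assoc, mul_div_cancel₀ _ (by linarith)]
  have h₀ : 0 ≤ t ^ (σ + 1) := rpow_nonneg ht₀ _
  have h₁ : 0 ≤ (1 - t) ^ (σ + 1) := rpow_nonneg (by linarith) _
  rcases le_total (1 / 2) t with ht | ht
  · linarith [rpow_le_two_mul_rpow_add_one σ ht]
  · have : t ^ σ ≤ (1 - t) ^ σ := rpow_le_rpow ht₀ (by linarith) hσ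
    linarith [rpow_le_two_mul_rpow_add_one σ (x := 1 - t) (by linarith)]

theorem integral_rpow_mono_on {f g : ℝ → ℝ} {a b σ : ℝ} (hab : a ≤ b) (hσ : 0 ≤ σ)
    (hf : Continuous f) (hg : Continuous g) (hf₀ : ∀ x ∈ Set.Icc a b, 0 ≤ f x)
    (hfg : ∀ x ∈ Set.Icc a b, f x ≤ g x) :
    ∫ x in a..b, f x ^ σ ≤ ∫ x in a..b, g x ^ σ :=
  integral_mono_on hab ((hf.rpow_const fun _ => Or.inr hσ).intervalIntegrable a b)
    ((hg.rpow_const fun _ => Or.inr hσ).intervalIntegrable a b)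
    fun x hx => rpow_le_rpow (hf₀ x hx) (hfg x hx) hσ

theorem rpow_le_two_mul_integral_abs_mul_sub_rpow {σ a b : ℝ} (hσ : 0 ≤ σ) (hb : 0 ≤ b) :
    b ^ σ ≤ 2 * (σ + 1) * ∫ θ in (0:ℝ)..1, |θ * a - b| ^ σ := by
  suffices h : ∃ c t, 0 ≤ c ∧ 0 ≤ t ∧ t ≤ 1 ∧ c * t = b ∧
      ∀ θ ∈ Set.Icc (0:ℝ) 1, c * |θ - t| ≤ |θ * a - b| by
    obtain ⟨c, t, hc, ht₀, ht₁, hct, hle⟩ := h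
    calc b ^ σ = c ^ σ * t ^ σ := by rw [← hct, mul_rpow hc ht₀]
      _ ≤ c ^ σ * (2 * (σ + 1) * ∫ θ in (0:ℝ)..1, |θ - t| ^ σ) := by
        gcongr; exact rpow_le_two_mul_integral_abs_sub_rpow hσ ht₀ ht₁
      _ = 2 * (σ + 1) * ∫ θ in (0:ℝ)..1, (c * |θ - t|) ^ σ := by
        simp only [mul_rpow hc (abs_nonneg _), integral_const_mul]; ring
      _ ≤ 2 * (σ + 1) * ∫ θ in (0:ℝ)..1, |θ * a - b| ^ σ := by
        gcongr 1
        exact integral_rpow_mono_on zero_le_one hσ (by fun_prop) (by fun_prop)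
          (fun θ _ => by positivity) hle
  rcases le_or_gt a b with hab | hab
  · refine ⟨b, 1, hb, zero_le_one, le_rfl, mul_one b, fun θ hθ => ?_⟩
    rw [abs_sub_comm, abs_of_nonneg (by linarith [hθ.2]), abs_sub_comm]
    nlinarith [le_abs_self (b - θ * a), hθ.1, hθ.2]
  · have ha : 0 < a := hb.trans_lt hab
    refine ⟨a, b / a, ha.le, div_nonneg hb ha.le, (div_le_one ha).2 hab.le,
      mul_div_cancel₀ b ha.ne', fun θ _ => ?_⟩
    rw [← abs_of_pos ha, ← abs_mul, abs_of_pos ha, mul_sub, mul_div_cancel₀ b ha.ne', mul_comm]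

theorem rpow_norm_le_two_mul_integral_norm_smul_sub_rpow {E : Type*} [NormedAddCommGroup E]
    [NormedSpace ℝ E] {σ : ℝ} (hσ : 0 ≤ σ) (ξ η : E) :
    ‖η‖ ^ σ ≤ 2 * (σ + 1) * ∫ θ in (0:ℝ)..1, ‖θ • ξ - η‖ ^ σ := by
  refine (rpow_le_two_mul_integral_abs_mul_sub_rpow (a := ‖ξ‖) hσ (norm_nonneg η)).trans ?_
  gcongr 1
  refine integral_rpow_mono_on zero_le_one hσ (by fun_prop) (by fun_prop)
    (fun θ _ => abs_nonneg _) fun θ hθ => ?_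
  simpa [norm_smul, abs_of_nonneg hθ.1] using abs_norm_sub_norm_le (θ • ξ) η

theorem two_mul_add_one_le_two_rpow_mul {σ : ℝ} (hσ : 0 ≤ σ) :
    2 * (σ + 1) ≤ 2 ^ σ * (1 + 2 ^ σ * (1 + σ)) := by
  have h_one_le : (1:ℝ) ≤ 2 ^ σ := one_le_rpow (by norm_num) hσ
  have h_four : 1 + σ ≤ 2 ^ σ * 2 ^ σ := by
    rw [← rpow_add two_pos, rpow_def_of_pos two_pos]
    nlinarith [add_one_le_exp (log 2 * (σ + σ)), log_two_gt_d9]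
  nlinarith

/-- Let `σ > 0` and `ξ, η ∈ ℝ^d`. Then
`2^σ (1 + 2^σ(1+σ)) ∫₀¹ |θξ - η|^σ dθ ≥ |η|^σ`. -/
theorem stmt_5 (d : ℕ) (σ : ℝ) (hσ : 0 < σ) (ξ η : EuclideanSpace ℝ (Fin d)) :
    ‖η‖ ^ σ ≤ 2 ^ σ * (1 + 2 ^ σ * (1 + σ)) * ∫ θ in (0:ℝ)..1, ‖θ • ξ - η‖ ^ σ := by
  refine (rpow_norm_le_two_mul_integral_norm_smul_sub_rpow hσ.le ξ η).trans ?_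
  exact mul_le_mul_of_nonneg_right (two_mul_add_one_le_two_rpow_mul hσ.le)
    (integral_nonneg zero_le_one fun θ _ => by positivity)
end

section
/- Let σ > 0 and define the Fourier symbol m(ξ,η) := exp(-∫₀¹ |θξ - η|^σ dθ) for (ξ,η) ∈ ℝ^d × ℝ^d. Then there exists a constant c_σ > 0 depending only on σ such that m(ξ,η) ≤ C exp(-c_σ |(ξ,η)|^σ) for all ξ, η, where C depends only on σ. In particular, m ∈ L¹(ℝ^{2d}). -/
open MeasureTheory Real

/-!
Since `‖θ • ξ - η‖ ≥ |θ‖ξ‖ - ‖η‖|`, on `[0, 1/4]` (if `‖ξ‖ ≤ 2‖η‖`) or on `[3/4, 1]` (otherwise)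
the integrand is at least `((‖ξ‖ + ‖η‖) / 8) ^ σ`. Hence `∫₀¹ ‖θ • ξ - η‖ ^ σ ≥ c |(ξ,η)| ^ σ` with
`c = 8 ^ (-σ) / 4`, which gives the bound with `C = 1`. Integrability follows by comparison with
`exp (-c ‖p‖ ^ σ)`, integrable for any additive Haar measure by integration in polar coordinates.
-/

theorem mul_le_intervalIntegral_of_le_on_Icc {f : ℝ → ℝ} {a b u v m : ℝ}
    (hau : a ≤ u) (huv : u ≤ v) (hvb : v ≤ b) (hf : Continuous f) (hf0 : ∀ x, 0 ≤ f x)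
    (hm : ∀ x ∈ Set.Icc u v, m ≤ f x) :
    (v - u) * m ≤ ∫ x in a..b, f x :=
  calc (v - u) * m = ∫ _ in u..v, m := by simp
    _ ≤ ∫ x in u..v, f x :=
      intervalIntegral.integral_mono_on huv intervalIntegrable_const (hf.intervalIntegrable _ _) hm
    _ ≤ ∫ x in a..b, f x :=
      intervalIntegral.integral_mono_interval hau huv hvb (.of_forall hf0)
        (hf.intervalIntegrable _ _)

section

variable {E : Type*} [NormedAddCommGroup E] [NormedSpace ℝ E]

theorem exists_Icc_norm_add_norm_le_eight_mul_norm_smul_sub (ξ η : E) :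
    ∃ u : ℝ, 0 ≤ u ∧ u + 1 / 4 ≤ 1 ∧ ∀ θ ∈ Set.Icc u (u + 1 / 4), ‖ξ‖ + ‖η‖ ≤ 8 * ‖θ • ξ - η‖ := by
  have hlower : ∀ θ, 0 ≤ θ → |θ * ‖ξ‖ - ‖η‖| ≤ ‖θ • ξ - η‖ := fun θ hθ => by
    simpa [norm_smul, abs_of_nonneg hθ] using abs_norm_sub_norm_le (θ • ξ) η
  rcases le_total ‖ξ‖ (2 * ‖η‖) with h | h
  · refine ⟨0, le_rfl, by norm_num, fun θ ⟨hθ0, hθ1⟩ => ?_⟩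
    have := (abs_le.mp (hlower θ hθ0)).1
    nlinarith [norm_nonneg ξ]
  · refine ⟨3 / 4, by norm_num, by norm_num, fun θ ⟨hθ0, hθ1⟩ => ?_⟩
    have := (abs_le.mp (hlower θ (by linarith))).2
    nlinarith [norm_nonneg ξ, norm_nonneg η]

theorem le_integral_norm_smul_sub_rpow {σ : ℝ} (hσ : 0 ≤ σ) (ξ η : E) :
    (8 ^ σ)⁻¹ / 4 * √(‖ξ‖ ^ 2 + ‖η‖ ^ 2) ^ σ ≤ ∫ θ in (0 : ℝ)..1, ‖θ • ξ - η‖ ^ σ := by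
  obtain ⟨u, hu0, hu1, hu⟩ := exists_Icc_norm_add_norm_le_eight_mul_norm_smul_sub ξ η
  have hsqrt : √(‖ξ‖ ^ 2 + ‖η‖ ^ 2) ≤ ‖ξ‖ + ‖η‖ :=
    sqrt_le_iff.mpr ⟨by positivity, by nlinarith [norm_nonneg ξ, norm_nonneg η]⟩
  calc (8 ^ σ)⁻¹ / 4 * √(‖ξ‖ ^ 2 + ‖η‖ ^ 2) ^ σ
      = (u + 1 / 4 - u) * (√(‖ξ‖ ^ 2 + ‖η‖ ^ 2) / 8) ^ σ := by
        rw [div_rpow (sqrt_nonneg _) (by norm_num)]; ring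
    _ ≤ ∫ θ in (0 : ℝ)..1, ‖θ • ξ - η‖ ^ σ := by
        refine mul_le_intervalIntegral_of_le_on_Icc hu0 (by linarith) hu1
          (by fun_prop (disch := exact Or.inr hσ)) (fun _ => by positivity) fun θ hθ => ?_
        gcongr
        linarith [hu θ hθ]

end

theorem integrable_exp_neg_mul_norm_rpow {E : Type*} [NormedAddCommGroup E] [NormedSpace ℝ E]
    [FiniteDimensional ℝ E] [MeasurableSpace E] [BorelSpace E] (μ : Measure E)
    [μ.IsAddHaarMeasure] {b p : ℝ} (hb : 0 < b) (hp : 0 < p) :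
    Integrable (fun x => exp (-b * ‖x‖ ^ p)) μ := by
  nontriviality E
  rw [integrable_fun_norm_addHaar μ (f := fun y => exp (-b * y ^ p))]
  have hdim : (1 : ℝ) ≤ Module.finrank ℝ E := Nat.one_le_cast.mpr Module.finrank_pos
  refine (integrableOn_rpow_mul_exp_neg_mul_rpow (s := Module.finrank ℝ E - 1)
    (by linarith) hp hb).congr_fun (fun y _ => ?_) measurableSet_Ioi
  rw [smul_eq_mul, ← rpow_natCast, Nat.cast_pred Module.finrank_pos]

/-- Gaussian-type decay of the Fourier symbol of the fractional Kolmogorov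
fundamental solution: for `σ > 0` and
`m(ξ,η) := exp(-∫₀¹ |θξ - η|^σ dθ)`, there are constants `C, c_σ > 0`
depending only on `σ` (and `d`) with `m(ξ,η) ≤ C exp(-c_σ |(ξ,η)|^σ)`;
in particular `m ∈ L¹(ℝ^{2d})`. -/
theorem stmt_6 (d : ℕ) (σ : ℝ) (hσ : 0 < σ) :
    ∃ C > 0, ∃ c > 0,
      (∀ ξ η : EuclideanSpace ℝ (Fin d),
          Real.exp (-∫ θ in (0:ℝ)..1, ‖θ • ξ - η‖ ^ σ) ≤
            C * Real.exp (-c * (Real.sqrt (‖ξ‖ ^ 2 + ‖η‖ ^ 2)) ^ σ)) ∧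
      Integrable (fun p : EuclideanSpace ℝ (Fin d) × EuclideanSpace ℝ (Fin d) =>
        Real.exp (-∫ θ in (0:ℝ)..1, ‖θ • p.1 - p.2‖ ^ σ)) := by
  have hc : 0 < ((8 : ℝ) ^ σ)⁻¹ / 4 := by positivity
  have hdecay : ∀ ξ η : EuclideanSpace ℝ (Fin d),
      exp (-∫ θ in (0:ℝ)..1, ‖θ • ξ - η‖ ^ σ) ≤
        exp (-(((8 : ℝ) ^ σ)⁻¹ / 4) * √(‖ξ‖ ^ 2 + ‖η‖ ^ 2) ^ σ) := fun ξ η => by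
    rw [exp_le_exp, neg_mul, neg_le_neg_iff]
    exact le_integral_norm_smul_sub_rpow hσ.le ξ η
  refine ⟨1, one_pos, _, hc, fun ξ η => (hdecay ξ η).trans_eq (one_mul _).symm, ?_⟩
  have hcont : Continuous fun p : EuclideanSpace ℝ (Fin d) × EuclideanSpace ℝ (Fin d) =>
      exp (-∫ θ in (0:ℝ)..1, ‖θ • p.1 - p.2‖ ^ σ) := by
    fun_prop (disch := first | exact hσ.le | exact Or.inr hσ.le)
  rw [Measure.volume_eq_prod]
  refine (integrable_exp_neg_mul_norm_rpow (volume.prod volume) hc hσ).mono'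
    hcont.aestronglyMeasurable (.of_forall fun p => ?_)
  rw [norm_of_nonneg (exp_pos _).le]
  refine (hdecay p.1 p.2).trans (exp_le_exp.mpr ?_)
  rw [neg_mul, neg_mul, neg_le_neg_iff]
  gcongr
  -- the product carries the sup norm, which is at most the Euclidean norm of the pair
  exact max_le (le_sqrt_of_sq_le (by nlinarith)) (le_sqrt_of_sq_le (by nlinarith))
end

section
/- Let ũ: ℝ^{m} → ℂ^d and f̂: ℝ^{m} × ℝ^d → ℂ be Schwartz functions, and let Φ: ℝ^{m} × ℝ^d → ℝ^d be bounded measurable. Then the imaginary part of the trilinear convolution integral satisfies the exchange identity: 2 Im ∫∫ Φ(ρ,η) · (ũ *_ρ f̂)(ρ,η) \overline{f̂(ρ,η)} dρ dη = Im ∫∫∫ (Φ(ρ+ρ',η) - Φ(ρ',η)) · ũ(ρ) f̂(ρ',η) \overline{f̂(ρ+ρ',η)} dρ dρ' dη, provided ũ is the Fourier transform of a real-valued function (i.e. ũ(-ρ) = \overline{ũ(ρ)}) and Φ is real-valued. -/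
/-!
Write `A = ∫∫∫ Φ(ρ+ρ',η) · ũ(ρ) f̂(ρ',η) conj f̂(ρ+ρ',η)` and `B` for the same integral with
`Φ(ρ',η)` in place of `Φ(ρ+ρ',η)`. Unfolding the convolution and shearing `ρ ↦ ρ + ρ'` turns
the left-hand integral into `A`, while the right-hand integral is `A - B`. The substitution
`(ρ, ρ', η) ↦ (-ρ, ρ + ρ', η)` exchanges the two copies of `f̂`, so `ũ(-ρ) = conj ũ(ρ)` and the
reality of `Φ` give `B = conj A`, whence `Im (A - B) = 2 Im A`.
-/

open MeasureTheory ComplexConjugate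

lemma integral_prod_prod {X Y Z G : Type*} [MeasurableSpace X] [MeasurableSpace Y]
    [MeasurableSpace Z] {μ : Measure X} {ν : Measure Y} {κ : Measure Z} [SFinite μ] [SFinite ν]
    [SFinite κ] [NormedAddCommGroup G] [NormedSpace ℝ G]
    {g : X × (Y × Z) → G} (hg : Integrable g (μ.prod (ν.prod κ))) :
    ∫ z, g z ∂(μ.prod (ν.prod κ)) = ∫ x, ∫ y, ∫ z, g (x, (y, z)) ∂κ ∂ν ∂μ := by
  rw [integral_prod g hg]
  refine integral_congr_ae ?_
  filter_upwards [hg.prod_right_ae] with x hx using integral_prod _ hx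

section Exchange

variable {E F : Type*} [AddCommGroup E] [MeasurableSpace E] [MeasurableAdd₂ E] [MeasurableSpace F]
  {μ : Measure E} {ν : Measure F} {u : E → ℂ} {f : E × F → ℂ}

lemma integrable_mul_mul_conj_shift {w : E × (E × F) → ℂ} {C M : ℝ} (hu : Integrable u μ)
    (hf : Integrable f (μ.prod ν)) (hf_meas : StronglyMeasurable f) (hfC : ∀ p, ‖f p‖ ≤ C)
    (hw : AEStronglyMeasurable w (μ.prod (μ.prod ν))) (hwM : ∀ z, ‖w z‖ ≤ M) :
    Integrable (fun z => w z * u z.1 * f z.2 * conj (f (z.1 + z.2.1, z.2.2)))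
      (μ.prod (μ.prod ν)) := by
  have h_shift : AEStronglyMeasurable (fun z : E × (E × F) => conj (f (z.1 + z.2.1, z.2.2)))
      (μ.prod (μ.prod ν)) :=
    (continuous_star.comp_stronglyMeasurable
      (hf_meas.comp_measurable (by fun_prop))).aestronglyMeasurable
  refine ((hu.mul_prod hf).bdd_mul (f := fun z => w z * conj (f (z.1 + z.2.1, z.2.2)))
    (c := M * C) (hw.mul h_shift) (ae_of_all _ fun z => ?_)).congr (ae_of_all _ fun z => by ring)
  rw [norm_mul, Complex.norm_conj]
  exact mul_le_mul (hwM z) (hfC _) (norm_nonneg _) ((norm_nonneg _).trans (hwM z))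

variable [MeasurableNeg E] [SFinite μ] [SFinite ν]

def shearAddRightProd : E × (E × F) ≃ᵐ E × (E × F) :=
  MeasurableEquiv.prodAssoc.symm.trans
    (((MeasurableEquiv.shearAddRight E).prodCongr (MeasurableEquiv.refl F)).trans
      MeasurableEquiv.prodAssoc)

@[simp]
lemma shearAddRightProd_apply (z : E × (E × F)) :
    shearAddRightProd z = (z.1, (z.1 + z.2.1, z.2.2)) :=
  rfl

lemma measurePreserving_shearAddRightProd [μ.IsAddLeftInvariant] :
    MeasurePreserving (shearAddRightProd : E × (E × F) ≃ᵐ _) (μ.prod (μ.prod ν))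
      (μ.prod (μ.prod ν)) :=
  (measurePreserving_prodAssoc μ μ ν).comp
    (((measurePreserving_prod_add μ μ).prod (MeasurePreserving.id ν)).comp
      (measurePreserving_prodAssoc μ μ ν).symm)

variable [μ.IsAddLeftInvariant] [μ.IsNegInvariant]

lemma integral_mul_convolution_eq {ψ : E × F → ℂ}
    (h : Integrable (fun z => ψ (z.1 + z.2.1, z.2.2) * (u z.1 * f z.2)) (μ.prod (μ.prod ν))) :
    ∫ p, ψ p * ∫ ρ', u (p.1 - ρ') * f (ρ', p.2) ∂μ ∂(μ.prod ν) =
      ∫ z, ψ (z.1 + z.2.1, z.2.2) * (u z.1 * f z.2) ∂(μ.prod (μ.prod ν)) := by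
  have h_conv (p : E × F) :
      ∫ ρ', u (p.1 - ρ') * f (ρ', p.2) ∂μ = ∫ ρ, u ρ * f (p.1 - ρ, p.2) ∂μ := by
    simpa using (integral_sub_left_eq_self (fun ρ => u (p.1 - ρ) * f (ρ, p.2)) μ p.1).symm
  set g : E × (E × F) → ℂ := fun z => ψ z.2 * (u z.1 * f (z.2.1 - z.1, z.2.2))
  have hg : Integrable g (μ.prod (μ.prod ν)) := by
    rw [← measurePreserving_shearAddRightProd.integrable_comp_emb
      shearAddRightProd.measurableEmbedding]
    simpa [g, Function.comp_def] using h
  calc ∫ p, ψ p * ∫ ρ', u (p.1 - ρ') * f (ρ', p.2) ∂μ ∂(μ.prod ν)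
      = ∫ p, ∫ ρ, g (ρ, p) ∂μ ∂(μ.prod ν) := by simp_rw [h_conv, ← integral_const_mul]; rfl
    _ = ∫ z, g z ∂(μ.prod (μ.prod ν)) := (integral_prod_symm g hg).symm
    _ = ∫ z, g (shearAddRightProd z) ∂(μ.prod (μ.prod ν)) :=
      (measurePreserving_shearAddRightProd.integral_comp' g).symm
    _ = _ := by simp [g]

lemma integral_conj_shift_eq_conj (hreal : ∀ ρ, u (-ρ) = conj (u ρ)) (ψ : E × F → ℝ) :
    ∫ z, (ψ z.2 : ℂ) * u z.1 * f z.2 * conj (f (z.1 + z.2.1, z.2.2)) ∂(μ.prod (μ.prod ν)) =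
      conj (∫ z, (ψ (z.1 + z.2.1, z.2.2) : ℂ) * u z.1 * f z.2 * conj (f (z.1 + z.2.1, z.2.2))
        ∂(μ.prod (μ.prod ν))) := by
  set reflect : E × (E × F) ≃ᵐ E × (E × F) :=
    shearAddRightProd.trans ((MeasurableEquiv.neg E).prodCongr (MeasurableEquiv.refl _))
  have h_reflect : MeasurePreserving reflect (μ.prod (μ.prod ν)) (μ.prod (μ.prod ν)) :=
    ((Measure.measurePreserving_neg μ).prod (MeasurePreserving.id _)).comp
      measurePreserving_shearAddRightProd
  rw [← integral_conj, ← h_reflect.integral_comp']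
  refine integral_congr_ae (ae_of_all _ fun z => ?_)
  have h_apply : reflect z = (-z.1, (z.1 + z.2.1, z.2.2)) := rfl
  simp [h_apply, hreal]
  ring

theorem two_mul_im_integral_mul_convolution_mul_conj {φ : E × F → ℝ} {C M : ℝ}
    (hu : Integrable u μ) (hf : Integrable f (μ.prod ν)) (hf_meas : StronglyMeasurable f)
    (hfC : ∀ p, ‖f p‖ ≤ C) (hφ : Measurable φ) (hφM : ∀ p, |φ p| ≤ M)
    (hreal : ∀ ρ, u (-ρ) = conj (u ρ)) :
    2 * (∫ p, (φ p : ℂ) * (∫ ρ', u (p.1 - ρ') * f (ρ', p.2) ∂μ) * conj (f p) ∂(μ.prod ν)).im =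
      (∫ z, ((φ (z.1 + z.2.1, z.2.2) - φ z.2 : ℝ) : ℂ) * u z.1 * f z.2 *
        conj (f (z.1 + z.2.1, z.2.2)) ∂(μ.prod (μ.prod ν))).im := by
  set A := ∫ z, (φ (z.1 + z.2.1, z.2.2) : ℂ) * u z.1 * f z.2 * conj (f (z.1 + z.2.1, z.2.2))
    ∂(μ.prod (μ.prod ν))
  have h_weight {σ : E × (E × F) → E × F} (hσ : Measurable σ) :
      Integrable (fun z => (φ (σ z) : ℂ) * u z.1 * f z.2 * conj (f (z.1 + z.2.1, z.2.2)))
        (μ.prod (μ.prod ν)) :=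
    integrable_mul_mul_conj_shift hu hf hf_meas hfC
      (Complex.measurable_ofReal.comp (hφ.comp hσ)).aestronglyMeasurable
      (fun z => by rw [Complex.norm_real, Real.norm_eq_abs]; exact hφM _)
  have hA := h_weight (σ := fun z => (z.1 + z.2.1, z.2.2)) (by fun_prop)
  have hB := h_weight (σ := fun z => z.2) (by fun_prop)
  have h_lhs : ∫ p, (φ p : ℂ) * (∫ ρ', u (p.1 - ρ') * f (ρ', p.2) ∂μ) * conj (f p) ∂(μ.prod ν)
      = A := by
    simp_rw [mul_right_comm _ (∫ _, _ ∂μ)]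
    rw [integral_mul_convolution_eq (ψ := fun p => (φ p : ℂ) * conj (f p))
      (hA.congr (ae_of_all _ fun z => by ring))]
    exact integral_congr_ae (ae_of_all _ fun z => by ring)
  push_cast
  simp_rw [sub_mul]
  rw [integral_sub hA hB, integral_conj_shift_eq_conj hreal, h_lhs, Complex.sub_im,
    Complex.conj_im]
  ring

theorem two_mul_im_sum_integral_mul_convolution_mul_conj {ι : Type*} [Fintype ι]
    {u : E → ι → ℂ} {Φ : E × F → ι → ℝ} {C M : ℝ}
    (hu : ∀ i, Integrable (fun ρ => u ρ i) μ) (hf : Integrable f (μ.prod ν))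
    (hf_meas : StronglyMeasurable f) (hfC : ∀ p, ‖f p‖ ≤ C) (hΦ : Measurable Φ)
    (hΦM : ∀ p, ‖Φ p‖ ≤ M) (hreal : ∀ ρ i, u (-ρ) i = conj (u ρ i)) :
    2 * (∑ i, ∫ p, (Φ p i : ℂ) * (∫ ρ', u (p.1 - ρ') i * f (ρ', p.2) ∂μ) * conj (f p)
        ∂(μ.prod ν)).im =
      (∫ ρ, ∫ ρ', ∫ η, (∑ i, ((Φ (ρ + ρ', η) i - Φ (ρ', η) i : ℝ) : ℂ) * u ρ i) * f (ρ', η) *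
        conj (f (ρ + ρ', η)) ∂ν ∂μ ∂μ).im := by
  have hΦM_apply (p : E × F) (i : ι) : |Φ p i| ≤ M := by
    simpa using (norm_le_pi_norm (Φ p) i).trans (hΦM p)
  set g : ι → E × (E × F) → ℂ := fun i z => ((Φ (z.1 + z.2.1, z.2.2) i - Φ z.2 i : ℝ) : ℂ) *
    u z.1 i * f z.2 * conj (f (z.1 + z.2.1, z.2.2))
  have hg (i : ι) : Integrable (g i) (μ.prod (μ.prod ν)) := by
    have hw : Measurable fun z : E × (E × F) => Φ (z.1 + z.2.1, z.2.2) i - Φ z.2 i := by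
      fun_prop
    refine integrable_mul_mul_conj_shift (u := fun ρ => u ρ i) (M := M + M) (hu i) hf hf_meas
      hfC (w := fun z => ((Φ (z.1 + z.2.1, z.2.2) i - Φ z.2 i : ℝ) : ℂ))
      (Complex.measurable_ofReal.comp hw).aestronglyMeasurable fun z => ?_
    rw [Complex.norm_real, Real.norm_eq_abs]
    exact (abs_sub _ _).trans (add_le_add (hΦM_apply _ i) (hΦM_apply _ i))
  have h_sum : (fun z : E × (E × F) => (∑ i, ((Φ (z.1 + z.2.1, z.2.2) i - Φ z.2 i : ℝ) : ℂ) *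
      u z.1 i) * f z.2 * conj (f (z.1 + z.2.1, z.2.2))) = fun z => ∑ i, g i z := by
    simp only [g, Finset.sum_mul]
  calc 2 * (∑ i, ∫ p, (Φ p i : ℂ) * (∫ ρ', u (p.1 - ρ') i * f (ρ', p.2) ∂μ) * conj (f p)
        ∂(μ.prod ν)).im
      = ∑ i, (∫ z, g i z ∂(μ.prod (μ.prod ν))).im := by
        rw [Complex.im_sum, Finset.mul_sum]
        exact Finset.sum_congr rfl fun i _ =>
          two_mul_im_integral_mul_convolution_mul_conj (u := fun ρ => u ρ i)
            (φ := fun p => Φ p i) (hu i) hf hf_meas hfC ((measurable_pi_apply i).comp hΦ)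
            (hΦM_apply · i) (hreal · i)
    _ = (∫ z, ∑ i, g i z ∂(μ.prod (μ.prod ν))).im := by
        rw [integral_finsetSum _ fun i _ => hg i, Complex.im_sum]
    _ = _ := by
        rw [← h_sum, integral_prod_prod (h_sum ▸ integrable_finsetSum _ fun i _ => hg i)]

end Exchange

/-- Exchange identity for the trilinear convolution term arising from the
inhomogeneous flux `u·∇_x`: if `uh` is the Fourier transform of a real-valued
function (`uh(-ρ) = conj uh(ρ)`) and `Φ` is real-valued, bounded and measurable,
then
`2 Im ∫∫ Φ(ρ,η)·(uh *_ρ fh)(ρ,η) conj fh(ρ,η) dρ dη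
  = Im ∫∫∫ (Φ(ρ+ρ',η) - Φ(ρ',η))·uh(ρ) fh(ρ',η) conj fh(ρ+ρ',η) dρ dρ' dη`. -/
theorem stmt_13 (m d n : ℕ)
    (uh : SchwartzMap (EuclideanSpace ℝ (Fin m)) (Fin n → ℂ))
    (fh : SchwartzMap (EuclideanSpace ℝ (Fin m) × EuclideanSpace ℝ (Fin d)) ℂ)
    (Φ : EuclideanSpace ℝ (Fin m) × EuclideanSpace ℝ (Fin d) → Fin n → ℝ)
    (hΦmeas : Measurable Φ) (hΦbdd : ∃ M, ∀ p, ‖Φ p‖ ≤ M)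
    (hreal : ∀ ρ i, uh (-ρ) i = starRingEnd ℂ (uh ρ i)) :
    2 * (∑ i : Fin n,
        ∫ p : EuclideanSpace ℝ (Fin m) × EuclideanSpace ℝ (Fin d),
          ((Φ p i : ℝ) : ℂ) *
            (∫ ρ' : EuclideanSpace ℝ (Fin m), uh (p.1 - ρ') i * fh (ρ', p.2)) *
            starRingEnd ℂ (fh p)).im =
      (∫ ρ : EuclideanSpace ℝ (Fin m), ∫ ρ' : EuclideanSpace ℝ (Fin m),
        ∫ η : EuclideanSpace ℝ (Fin d),
          (∑ i : Fin n, ((Φ (ρ + ρ', η) i - Φ (ρ', η) i : ℝ) : ℂ) * uh ρ i) *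
            fh (ρ', η) * starRingEnd ℂ (fh (ρ + ρ', η))).im := by
  obtain ⟨M, hM⟩ := hΦbdd
  -- instance search does not find `HasTemperateGrowth` for the product measure unaided
  have : (volume.prod volume : Measure (EuclideanSpace ℝ (Fin m) × EuclideanSpace ℝ (Fin d)))
      |>.IsAddHaarMeasure := inferInstance
  exact two_mul_im_sum_integral_mul_convolution_mul_conj
    (fun i => (ContinuousLinearMap.proj (R := ℂ) i).integrable_comp
      (uh.integrable (μ := volume)))
    (fh.integrable (μ := volume.prod volume))
    fh.continuous.stronglyMeasurable (fh.norm_le_seminorm ℝ) hΦmeas hM hreal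
end
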